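/- arXiv:2404.17389 — 5 statements merged into one kernel-verified Lean document; each statement's English description precedes it below -/
import Mathlib

section
/- Let M and V be finite signed measures on ℤ such that the Wasserstein norm ‖M‖_W = Σ_{k∈ℤ}|M((−∞,k])| is finite. Then ‖M*V‖_W ≤ ‖M‖_W · ‖V‖_TV. -/
open scoped BigOperators

noncomputable section

/-- A (signed) measure on ℤ, represented by its point masses. -/
abbrev SM := ℤ → ℝ

/-- Point mass at `a ∈ ℤ`. -/
def dirac (a : ℤ) : SM := fun k => if k = a then 1 else 0

/-- Convolution of two measures on ℤ. -/
def conv (M V : SM) : SM := fun m => ∑' k : ℤ, M (m - k) * V k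

/-- Convolution powers, `convPow M 0 = I` (point mass at 0). -/
def convPow (M : SM) : ℕ → SM
  | 0 => dirac 0
  | n + 1 => conv (convPow M n) M

/-- Exponential of a measure: `exp M = ∑_{j≥0} M^{*j}/j!`. -/
def expSM (M : SM) : SM := fun k => ∑' j : ℕ, convPow M j k / (Nat.factorial j : ℝ)

/-- Total variation norm `‖M‖_TV = ∑_k |M{k}|`. -/
def tvNorm (M : SM) : ℝ := ∑' k : ℤ, |M k|

/-- Local (point) norm `‖M‖_∞ = sup_k |M{k}|`. -/
def locNorm (M : SM) : ℝ := ⨆ k : ℤ, |M k|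

/-- `M((-∞,k])`. -/
def cdf (M : SM) (k : ℤ) : ℝ := ∑' j : ℤ, if j ≤ k then M j else 0

/-- Wasserstein norm `‖M‖_W = ∑_k |M((-∞,k])|`. -/
def wNorm (M : SM) : ℝ := ∑' k : ℤ, |cdf M k|

/-- ℓ_r norm. -/
def lrNorm (r : ℝ) (M : SM) : ℝ := (∑' k : ℤ, |M k| ^ r) ^ (1 / r)

/-- L_r norm. -/
def LrNorm (r : ℝ) (M : SM) : ℝ := (∑' k : ℤ, |cdf M k| ^ r) ^ (1 / r)

/-- Transition probabilities of the three-state Markov chain: states `0,1,2`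
correspond to `a₁,a₂,a₃`; from `a₁` or `a₃` the probabilities are `(α, 1-2α, α)`,
from `a₂` they are `(β, 1-2β, β)`. -/
def transP (a b : ℝ) (i j : Fin 3) : ℝ :=
  if i = 1 then (if j = 1 then 1 - 2 * b else b) else (if j = 1 then 1 - 2 * a else a)

/-- Joint distribution of `(Sₙ, ξₙ)`, with `f(a₁)=-1, f(a₂)=0, f(a₃)=1`,
`Sₙ = f(ξ₁)+⋯+f(ξₙ)` and initial distribution `p`. -/
def jointDist (a b : ℝ) (p : Fin 3 → ℝ) : ℕ → ℤ → Fin 3 → ℝ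
  | 0 => fun k i => if k = 0 then p i else 0
  | n + 1 => fun k j =>
      ∑ i : Fin 3, jointDist a b p n (k - ((j : ℤ) - 1)) i * transP a b i j

/-- `Fₙ`, the distribution of `Sₙ`. -/
def F (a b : ℝ) (p : Fin 3 → ℝ) (n : ℕ) : SM := fun k => ∑ j : Fin 3, jointDist a b p n k j

/-- The symmetric Skellam distribution `D = exp{λ(I₁-I) + λ(I₋₁-I)}`,
`λ = β/(1-2α+2β)`. -/
def skellam (a b : ℝ) : SM :=
  expSM ((b / (1 - 2 * a + 2 * b)) • (dirac 1 - dirac 0)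
    + (b / (1 - 2 * a + 2 * b)) • (dirac (-1) - dirac 0))

/-- `L = (I₋₁ + I₁)/2`. -/
def Lm : SM := (2 : ℝ)⁻¹ • (dirac (-1) + dirac 1)

/-- `U = L - I`. -/
def Um : SM := Lm - dirac 0

/-- The measure `A₁` of the first-order asymptotic expansion. -/
def A1 (a b p2 : ℝ) : SM :=
  (2 * (a - b) / (1 - 2 * a + 2 * b) * ((1 - 2 * a) / (1 - 2 * a + 2 * b) - p2)) • Um

/-- The measure `A₂` of the first-order asymptotic expansion. -/
def A2 (a b : ℝ) : SM :=
  (2 * b / (1 - 2 * a + 2 * b) ^ 2 *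
    (2 * (a - b) * (1 - 2 * a) / (1 - 2 * a + 2 * b) - b)) • convPow Um 2

/-- The compound geometric law `H = (1-2α) Σ_j (2α)^j L^{*(j+1)}`. -/
def Hm (a : ℝ) : SM := fun k => ∑' j : ℕ, (1 - 2 * a) * (2 * a) ^ j * convPow Lm (j + 1) k

/-- `G = exp{(2β(1-2α)/(1-2α+2β))(H - I)}`. -/
def Gm (a b : ℝ) : SM := expSM ((2 * b * (1 - 2 * a) / (1 - 2 * a + 2 * b)) • (Hm a - dirac 0))

/-!
Exchanging the order of summation gives `(M * V)((-∞,k]) = ∑ᵢ M((-∞,k-i]) V{i}`: the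
distribution function of `M * V` is the convolution of that of `M` with `V`. The triangle
inequality and Tonelli then bound `‖M * V‖_W` by the translation-invariant double sum
`∑ₖ ∑ᵢ |M((-∞,k-i])| |V{i}| = ‖M‖_W ‖V‖_TV`.
-/

section SumsOverGroups

variable {G : Type*} [AddGroup G] {f g : G → ℝ}

lemma summable_comp_sub_mul (hf : Summable f) (hg : Summable g) (hf0 : 0 ≤ f) (hg0 : 0 ≤ g) :
    Summable fun p : G × G => f (p.1 - p.2) * g p.2 := by
  have shear_injective : Function.Injective fun p : G × G => (p.1 - p.2, p.2) := by
    rintro ⟨a, b⟩ ⟨c, d⟩ h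
    simp only [Prod.mk.injEq] at h
    obtain ⟨hac, rfl⟩ := h
    simp [sub_left_inj.mp hac]
  exact (hf.mul_of_nonneg hg hf0 hg0).comp_injective shear_injective

lemma tsum_tsum_comp_sub_mul (hf : Summable f) (hg : Summable g) (hf0 : 0 ≤ f) (hg0 : 0 ≤ g) :
    ∑' k, ∑' i, f (k - i) * g i = (∑' k, f k) * ∑' i, g i := by
  calc ∑' k, ∑' i, f (k - i) * g i
      = ∑' i, ∑' k, f (k - i) * g i :=
        ((summable_comp_sub_mul hf hg hf0 hg0).tsum_comm (f := fun k i => f (k - i) * g i)).symm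
    _ = ∑' i, (∑' k, f k) * g i := by
        congr 1; funext i
        rw [tsum_mul_right, ← (Equiv.subRight i).tsum_eq f]; rfl
    _ = (∑' k, f k) * ∑' i, g i := tsum_mul_left

end SumsOverGroups

lemma tsum_ite_le_comp_sub (M : SM) (k i : ℤ) :
    ∑' j : ℤ, (if j ≤ k then M (j - i) else 0) = cdf M (k - i) := by
  rw [cdf, ← (Equiv.addRight i).tsum_eq]
  simp only [Equiv.coe_addRight, add_sub_cancel_right, le_sub_iff_add_le]

lemma cdf_conv {M V : SM} (hM : Summable fun k => |M k|) (hV : Summable fun k => |V k|) (k : ℤ) :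
    cdf (conv M V) k = ∑' i : ℤ, cdf M (k - i) * V i := by
  have hsum : Summable fun p : ℤ × ℤ => if p.1 ≤ k then M (p.1 - p.2) * V p.2 else 0 := by
    refine (summable_comp_sub_mul hM hV (fun _ => abs_nonneg _) (fun _ => abs_nonneg _))
      |>.of_norm_bounded fun p => ?_
    split_ifs
    · exact (abs_mul _ _).le
    · simp only [norm_zero]; positivity
  calc cdf (conv M V) k
      = ∑' j : ℤ, ∑' i : ℤ, (if j ≤ k then M (j - i) * V i else 0) := by
        unfold cdf conv
        congr 1; funext j
        split_ifs <;> simp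
    _ = ∑' i : ℤ, ∑' j : ℤ, (if j ≤ k then M (j - i) else 0) * V i := by
        rw [← hsum.tsum_comm (f := fun j i => if j ≤ k then M (j - i) * V i else 0)]
        simp only [ite_mul, zero_mul]
    _ = ∑' i : ℤ, cdf M (k - i) * V i := by
        simp only [tsum_mul_right, tsum_ite_le_comp_sub]

lemma abs_cdf_conv_le {M V : SM} (hM : Summable fun k => |M k|) (hV : Summable fun k => |V k|)
    (hW : Summable fun k => |cdf M k|) (k : ℤ) :
    |cdf (conv M V) k| ≤ ∑' i : ℤ, |cdf M (k - i)| * |V i| := by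
  have hs : Summable fun i : ℤ => ‖cdf M (k - i) * V i‖ := by
    simpa only [Real.norm_eq_abs, abs_mul] using
      (summable_comp_sub_mul hW hV (fun _ => abs_nonneg _) (fun _ => abs_nonneg _)).prod_factor k
  rw [cdf_conv hM hV k]
  simpa only [Real.norm_eq_abs, abs_mul] using norm_tsum_le_tsum_norm hs

theorem wNorm_conv_le :
    ∀ M V : SM, Summable (fun k => |M k|) → Summable (fun k => |V k|) →
      Summable (fun k => |cdf M k|) →
      wNorm (conv M V) ≤ wNorm M * tvNorm V := by
  intro M V hM hV hW
  have hW0 : 0 ≤ fun k => |cdf M k| := fun _ => abs_nonneg _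
  have hV0 : 0 ≤ fun k => |V k| := fun _ => abs_nonneg _
  have hbound : Summable fun k : ℤ => ∑' i : ℤ, |cdf M (k - i)| * |V i| :=
    (summable_comp_sub_mul hW hV hW0 hV0).prod
  have hpointwise := abs_cdf_conv_le hM hV hW
  calc wNorm (conv M V)
      ≤ ∑' k : ℤ, ∑' i : ℤ, |cdf M (k - i)| * |V i| :=
        (hbound.of_nonneg_of_le (fun _ => abs_nonneg _) hpointwise).tsum_le_tsum hpointwise hbound
    _ = wNorm M * tvNorm V := tsum_tsum_comp_sub_mul hW hV hW0 hV0
end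
end

section
/- Let M be a finite signed measure on ℤ. Then ‖M‖_TV = ‖(I₁ − I)*M‖_W, i.e. the total variation norm of M equals the Wasserstein norm of the convolution of M with the signed measure I₁ − I (point mass at 1 minus point mass at 0). -/
open scoped BigOperators

noncomputable section

/-! Convolving with `I₁ - I` turns `M` into `M(· - 1) - M`, whose distribution function
telescopes: `cdf M (k - 1) - cdf M k = -M k`. So the Wasserstein norm of the difference is
termwise the total variation norm of `M`. -/

open Set

lemma conv_dirac_sub_dirac (a b : ℤ) (M : SM) (m : ℤ) :
    conv (dirac a - dirac b) M m = M (m - a) - M (m - b) := by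
  have hterm : ∀ k, (dirac a - dirac b) (m - k) * M k =
      (if k = m - a then M (m - a) else 0) - (if k = m - b then M (m - b) else 0) := by
    intro k
    simp only [dirac, Pi.sub_apply, show ∀ c, m - k = c ↔ k = m - c from fun c => by omega]
    split_ifs <;> simp_all
  simp only [conv, hterm]
  rw [(hasSum_ite_eq _ _).summable.tsum_sub (hasSum_ite_eq _ _).summable,
    tsum_ite_eq, tsum_ite_eq]

lemma cdf_eq_tsum_indicator (M : SM) (k : ℤ) : cdf M k = ∑' j, (Iic k).indicator M j := by
  simp only [cdf, indicator_apply, mem_Iic]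

lemma cdf_sub {M N : SM} (hM : Summable M) (hN : Summable N) (k : ℤ) :
    cdf (M - N) k = cdf M k - cdf N k := by
  simp only [cdf_eq_tsum_indicator, indicator_sub', Pi.sub_apply]
  exact (hM.indicator _).tsum_sub (hN.indicator _)

lemma cdf_comp_sub_const (M : SM) (a k : ℤ) : cdf (fun m => M (m - a)) k = cdf M (k - a) := by
  rw [cdf, cdf, ← (Equiv.subRight a).tsum_eq (fun j => if j ≤ k - a then M j else 0)]
  simp only [Equiv.subRight_apply, sub_le_sub_iff_right]

lemma cdf_eq_cdf_pred_add {M : SM} (hM : Summable M) (k : ℤ) :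
    cdf M k = cdf M (k - 1) + M k := by
  rw [cdf_eq_tsum_indicator, (hM.indicator _).tsum_eq_add_tsum_ite k, cdf_eq_tsum_indicator,
    add_comm, indicator_of_mem (mem_Iic.2 le_rfl)]
  congr 1
  refine tsum_congr fun j => ?_
  by_cases hj : j = k
  · simp [hj]
  · simp only [hj, if_false, indicator_apply, mem_Iic]
    congr 1
    exact propext (by omega)

lemma cdf_conv_dirac_one_sub_dirac_zero {M : SM} (hM : Summable M) (k : ℤ) :
    cdf (conv (dirac 1 - dirac 0) M) k = -M k := by
  have hconv : conv (dirac 1 - dirac 0) M = (fun m => M (m - 1)) - fun m => M (m - 0) :=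
    funext (conv_dirac_sub_dirac 1 0 M)
  have hshift (a : ℤ) : Summable fun m => M (m - a) := (Equiv.subRight a).summable_iff.mpr hM
  rw [hconv, cdf_sub (hshift 1) (hshift 0), cdf_comp_sub_const, cdf_comp_sub_const, sub_zero,
    cdf_eq_cdf_pred_add hM k]
  ring

theorem tvNorm_eq_wNorm_diff :
    ∀ M : SM, Summable (fun k => |M k|) →
      tvNorm M = wNorm (conv (dirac 1 - dirac 0) M) := by
  intro M hM
  unfold tvNorm wNorm
  refine tsum_congr fun k => ?_
  rw [cdf_conv_dirac_one_sub_dirac_zero (summable_abs_iff.mp hM), abs_neg]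
end
end

section
/- Let 0 ≤ α ≤ 1/30, 0 < β ≤ 1/30, λ = β/(1−2α+2β) and D = exp{λ(I₁−I) + λ(I₋₁−I)}. Then for every n = 1,2,… there exists a finite signed measure Θ on ℤ with ‖Θ‖_TV ≤ 1 such that D^{*n} = exp{0.5·n·β·(I₁−I)} * Θ. -/
open scoped BigOperators

noncomputable section

/-!
Exponentials of finitely supported measures on `ℤ` behave like exponentials of numbers. Computing
in the group algebra `ℝ[ℤ]`, `exp{M}` is the power series `e^{MX} = ∑ Mⁿ Xⁿ / n!` summed
coefficientwise at `X = 1`; this double series converges absolutely because the ℓ¹ norm is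
submultiplicative, so the formal identity `e^{MX} e^{NX} = e^{(M+N)X}` yields
`exp{M} * exp{N} = exp{M + N}`.

Hence, with `c = nβ/2`, `D^{*n} = exp{c (I₁ − I)} * Θ` where
`Θ = exp{(nλ − c)(I₁ − I) + nλ(I₋₁ − I)}`. As `1 − 2α + 2β ≤ 2`, `λ ≥ β/2`, so both coefficients in
`Θ` are nonnegative, and `Θ = e^{−s} exp{(nλ − c) I₁ + nλ I₋₁}` (with `s = 2nλ − c`) is a
nonnegative measure of total mass `e^{−s} e^{s} = 1`.
-/

open Finset PowerSeries
open scoped AddMonoidAlgebra Nat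

theorem HasSum.sum_antidiagonal {A α : Type*} [AddCommMonoid A] [HasAntidiagonal A]
    [AddCommMonoid α] [TopologicalSpace α] [ContinuousAdd α] [RegularSpace α]
    {F : A × A → α} {a : α} (h : HasSum F a) :
    HasSum (fun n => ∑ kl ∈ antidiagonal n, F kl) a :=
  (HasAntidiagonal.sigmaAntidiagonalEquivProd.hasSum_iff.mpr h).sigma fun n =>
    (antidiagonal n).hasSum F

theorem conv_nonneg {M V : SM} (hM : 0 ≤ M) (hV : 0 ≤ V) : 0 ≤ conv M V :=
  fun _ => tsum_nonneg fun _ => mul_nonneg (hM _) (hV _)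

theorem dirac_nonneg (a : ℤ) : 0 ≤ dirac a := fun k => by
  unfold dirac; split_ifs <;> norm_num

theorem convPow_nonneg {M : SM} (hM : 0 ≤ M) : ∀ n, 0 ≤ convPow M n
  | 0 => dirac_nonneg 0
  | n + 1 => conv_nonneg (convPow_nonneg hM n) hM

theorem expSM_nonneg {M : SM} (hM : 0 ≤ M) : 0 ≤ expSM M :=
  fun _ => tsum_nonneg fun n => div_nonneg (convPow_nonneg hM n _) n.factorial.cast_nonneg

theorem conv_smul_dirac_zero (M : SM) (c : ℝ) : conv M (c • dirac 0) = c • M := by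
  funext m
  rw [conv, tsum_eq_single 0 fun k hk => by simp [dirac, hk]]
  simp [dirac, mul_comm]

theorem expSM_smul_dirac_zero (c : ℝ) : expSM (c • dirac 0) = Real.exp c • dirac 0 := by
  have hpow (n : ℕ) : convPow (c • dirac 0) n = c ^ n • dirac 0 := by
    induction n with
    | zero => simp [convPow]
    | succ n ih => rw [convPow, ih, conv_smul_dirac_zero, smul_smul, pow_succ']
  funext k
  calc expSM (c • dirac 0) k = (∑' n : ℕ, c ^ n / n !) * dirac 0 k := by
        simp only [expSM, hpow, Pi.smul_apply, smul_eq_mul, ← tsum_mul_right, div_mul_eq_mul_div]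
    _ = (Real.exp c • dirac 0) k := by
        rw [Real.exp_eq_exp_ℝ, NormedSpace.exp_eq_tsum_div]
        rfl

theorem hasSum_conv_tsum_tsum {ι κ : Type*} (M : ι → SM) (V : κ → SM)
    (hM : Summable fun p : ι × ℤ => ‖M p.1 p.2‖) (hV : Summable fun p : κ × ℤ => ‖V p.1 p.2‖)
    (m : ℤ) :
    HasSum (fun p : ι × κ => conv (M p.1) (V p.2) m)
      (conv (fun k => ∑' i, M i k) (fun k => ∑' j, V j k) m) := by
  set E : (ι × κ) × ℤ → ℝ := fun q => M q.1.1 (m - q.2) * V q.1.2 q.2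
  have hE : Summable E := by
    refine (summable_mul_of_summable_norm hM hV).comp_injective
      (i := fun q : (ι × κ) × ℤ => ((q.1.1, m - q.2), (q.1.2, q.2))) ?_
    rintro ⟨⟨i, j⟩, k⟩ ⟨⟨i', j'⟩, k'⟩ h
    simp only [Prod.mk.injEq] at h
    obtain ⟨⟨rfl, -⟩, rfl, rfl⟩ := h
    rfl
  have hMk (k : ℤ) : Summable fun i => ‖M i k‖ :=
    hM.comp_injective (i := fun i => (i, k)) fun _ _ h => (Prod.ext_iff.1 h).1
  have hVk (k : ℤ) : Summable fun j => ‖V j k‖ :=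
    hV.comp_injective (i := fun j => (j, k)) fun _ _ h => (Prod.ext_iff.1 h).1
  have hFubini : conv (fun k => ∑' i, M i k) (fun k => ∑' j, V j k) m
      = ∑' p : ι × κ, ∑' k, E (p, k) := calc
    _ = ∑' k, ∑' p : ι × κ, E (p, k) := tsum_congr fun k =>
        tsum_mul_tsum_of_summable_norm (hMk (m - k)) (hVk k)
    _ = ∑' p : ι × κ, ∑' k, E (p, k) := hE.tsum_comm
  rw [hFubini]
  exact hE.prod.hasSum

theorem coeff_single_one_eq_dirac (a : ℤ) :
    ⇑(AddMonoidAlgebra.single a 1 : ℝ[ℤ]).coeff = dirac a := by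
  funext k
  rw [AddMonoidAlgebra.coeff_single, Finsupp.single_apply, dirac]
  exact if_congr eq_comm rfl rfl

theorem coeff_one_eq_dirac : ⇑(1 : ℝ[ℤ]).coeff = dirac 0 :=
  coeff_single_one_eq_dirac 0

theorem conv_coeff_mul (f g : ℝ[ℤ]) : conv ⇑f.coeff ⇑g.coeff = ⇑(f * g).coeff := by
  funext m
  rw [conv, tsum_eq_sum (s := g.coeff.support) fun k hk => by
      simp [Finsupp.notMem_support_iff.mp hk],
    AddMonoidAlgebra.coeff_mul_apply_right, Finsupp.sum]
  simp only [sub_eq_add_neg]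

theorem convPow_coeff (f : ℝ[ℤ]) : ∀ n, convPow ⇑f.coeff n = ⇑(f ^ n).coeff
  | 0 => by rw [convPow, pow_zero, coeff_one_eq_dirac]
  | n + 1 => by rw [convPow, convPow_coeff f n, conv_coeff_mul, pow_succ]

def l1Norm (f : ℝ[ℤ]) : ℝ := ∑ k ∈ f.coeff.support, |f.coeff k|

theorem sum_abs_coeff_le_l1Norm (f : ℝ[ℤ]) (s : Finset ℤ) : ∑ k ∈ s, |f.coeff k| ≤ l1Norm f := by
  classical
  calc ∑ k ∈ s, |f.coeff k| = ∑ k ∈ s ∩ f.coeff.support, |f.coeff k| :=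
        (sum_subset inter_subset_left fun k hks hk => by simp_all).symm
    _ ≤ l1Norm f := sum_le_sum_of_subset_of_nonneg inter_subset_right fun _ _ _ => abs_nonneg _

theorem l1Norm_nonneg (f : ℝ[ℤ]) : 0 ≤ l1Norm f := Finset.sum_nonneg fun _ _ => abs_nonneg _

theorem l1Norm_mul_le (f g : ℝ[ℤ]) : l1Norm (f * g) ≤ l1Norm f * l1Norm g := by
  calc l1Norm (f * g)
      ≤ ∑ x ∈ (f * g).coeff.support, ∑ a ∈ g.coeff.support, |f.coeff (x - a)| * |g.coeff a| := by
        refine sum_le_sum fun x _ => ?_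
        rw [← conv_coeff_mul, conv, tsum_eq_sum (s := g.coeff.support) fun k hk => by
          simp [Finsupp.notMem_support_iff.mp hk]]
        exact (Finset.abs_sum_le_sum_abs _ _).trans_eq (by simp only [abs_mul])
    _ = ∑ a ∈ g.coeff.support, (∑ x ∈ (f * g).coeff.support, |f.coeff (x - a)|) * |g.coeff a| := by
        rw [sum_comm]; simp only [sum_mul]
    _ ≤ ∑ a ∈ g.coeff.support, l1Norm f * |g.coeff a| := by
        refine sum_le_sum fun a _ => mul_le_mul_of_nonneg_right ?_ (abs_nonneg _)
        rw [← sum_image (f := fun y => |f.coeff y|) fun _ _ _ _ => sub_left_inj.mp]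
        exact sum_abs_coeff_le_l1Norm f _
    _ = l1Norm f * l1Norm g := (mul_sum _ _ _).symm

theorem l1Norm_pow_le (f : ℝ[ℤ]) : ∀ n, l1Norm (f ^ n) ≤ l1Norm f ^ n
  | 0 => by
    rw [pow_zero, pow_zero, l1Norm, AddMonoidAlgebra.one_def, AddMonoidAlgebra.coeff_single,
      Finsupp.support_single _ one_ne_zero, sum_singleton, Finsupp.single_eq_same, abs_one]
  | n + 1 => by
    rw [pow_succ, pow_succ]
    exact (l1Norm_mul_le _ _).trans
      (mul_le_mul_of_nonneg_right (l1Norm_pow_le f n) (l1Norm_nonneg f))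

theorem coeff_coeff_rescale_exp (f : ℝ[ℤ]) (n : ℕ) (k : ℤ) :
    (coeff n (rescale f (exp ℝ[ℤ]))).coeff k = (f ^ n).coeff k / n ! := by
  rw [coeff_rescale, coeff_exp, ← Algebra.commutes, ← Algebra.smul_def,
    AddMonoidAlgebra.coeff_smul_apply, Rat.smul_def]
  push_cast
  ring

theorem expSM_coeff (f : ℝ[ℤ]) :
    expSM ⇑f.coeff = fun k => ∑' n, (coeff n (rescale f (exp ℝ[ℤ]))).coeff k := by
  funext k
  simp only [expSM, convPow_coeff, coeff_coeff_rescale_exp]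

theorem summable_norm_coeff_rescale_exp (f : ℝ[ℤ]) :
    Summable fun p : ℕ × ℤ => ‖(coeff p.1 (rescale f (exp ℝ[ℤ]))).coeff p.2‖ := by
  simp only [coeff_coeff_rescale_exp, norm_div, Real.norm_eq_abs, Nat.abs_cast]
  refine (summable_prod_of_nonneg fun _ => by positivity).mpr ⟨fun n => ?_, ?_⟩
  · exact summable_of_ne_finset_zero (s := (f ^ n).coeff.support) fun k hk => by
      simp [Finsupp.notMem_support_iff.mp hk]
  · refine (Real.summable_pow_div_factorial (l1Norm f)).of_nonneg_of_le
      (fun _ => tsum_nonneg fun _ => by positivity) fun n => ?_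
    dsimp only
    rw [tsum_div_const, tsum_eq_sum (s := (f ^ n).coeff.support) fun k hk => by
      simp [Finsupp.notMem_support_iff.mp hk]]
    gcongr
    exact (sum_abs_coeff_le_l1Norm _ _).trans (l1Norm_pow_le f n)

theorem conv_expSM_coeff (f g : ℝ[ℤ]) :
    conv (expSM ⇑f.coeff) (expSM ⇑g.coeff) = expSM ⇑(f + g).coeff := by
  funext m
  have h := hasSum_conv_tsum_tsum (fun n => ⇑(coeff n (rescale f (exp ℝ[ℤ]))).coeff)
    (fun n => ⇑(coeff n (rescale g (exp ℝ[ℤ]))).coeff)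
    (summable_norm_coeff_rescale_exp f) (summable_norm_coeff_rescale_exp g) m
  simp only [conv_coeff_mul, ← expSM_coeff] at h
  rw [← h.sum_antidiagonal.tsum_eq, expSM_coeff, ← exp_mul_exp_eq_exp_add]
  simp only [coeff_mul, AddMonoidAlgebra.coeff_sum, Finsupp.finsetSum_apply]

theorem expSM_coeff_zero : expSM ⇑(0 : ℝ[ℤ]).coeff = dirac 0 := by
  simpa using expSM_smul_dirac_zero 0

theorem convPow_expSM_coeff (f : ℝ[ℤ]) : ∀ n : ℕ, convPow (expSM ⇑f.coeff) n = expSM ⇑(n • f).coeff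
  | 0 => by rw [convPow, zero_smul, expSM_coeff_zero]
  | n + 1 => by rw [convPow, convPow_expSM_coeff f n, conv_expSM_coeff, succ_nsmul]

def mass : ℝ[ℤ] →ₐ[ℝ] ℝ := AddMonoidAlgebra.lift ℝ ℝ ℤ 1

theorem tsum_coeff_eq_mass (f : ℝ[ℤ]) : ∑' k, f.coeff k = mass f := by
  rw [tsum_eq_sum (s := f.coeff.support) fun k hk => Finsupp.notMem_support_iff.mp hk, mass,
    AddMonoidAlgebra.lift_apply, Finsupp.sum]
  simp

theorem mass_single (a : ℤ) (c : ℝ) : mass (AddMonoidAlgebra.single a c) = c := by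
  rw [mass, AddMonoidAlgebra.lift_single]
  simp

theorem tsum_expSM_coeff (f : ℝ[ℤ]) : ∑' k, expSM ⇑f.coeff k = Real.exp (mass f) := by
  have hE : Summable (Function.uncurry fun n k => (coeff n (rescale f (exp ℝ[ℤ]))).coeff k) :=
    (summable_norm_coeff_rescale_exp f).of_norm
  rw [expSM_coeff, hE.tsum_comm, Real.exp_eq_exp_ℝ, NormedSpace.exp_eq_tsum_div]
  simp only [coeff_coeff_rescale_exp, tsum_div_const, tsum_coeff_eq_mass, map_pow]

theorem expSM_coeff_add_smul_one (f : ℝ[ℤ]) (c : ℝ) :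
    expSM ⇑(f + c • 1).coeff = Real.exp c • expSM ⇑f.coeff := by
  have hc : ⇑(c • (1 : ℝ[ℤ])).coeff = c • dirac 0 := by
    rw [AddMonoidAlgebra.coeff_smul, Finsupp.coe_smul, coeff_one_eq_dirac]
  rw [← conv_expSM_coeff, hc, expSM_smul_dirac_zero, conv_smul_dirac_zero]

theorem expSM_coeff_nonneg {f : ℝ[ℤ]} (hf : ∀ k ≠ 0, 0 ≤ f.coeff k) : 0 ≤ expSM ⇑f.coeff := by
  set p := f - f.coeff 0 • 1
  have hp : 0 ≤ ⇑p.coeff := fun k => by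
    have hpk : p.coeff k = f.coeff k - f.coeff 0 * dirac 0 k := by
      simp [p, ← coeff_one_eq_dirac]
    rw [hpk]
    by_cases hk : k = 0
    · simp [hk, dirac]
    · simpa [hk, dirac] using hf k hk
  rw [show f = p + f.coeff 0 • 1 by simp [p], expSM_coeff_add_smul_one]
  exact smul_nonneg (Real.exp_pos _).le (expSM_nonneg hp)

theorem tvNorm_expSM_coeff {f : ℝ[ℤ]} (hf : ∀ k ≠ 0, 0 ≤ f.coeff k) :
    tvNorm (expSM ⇑f.coeff) = Real.exp (mass f) := by
  rw [tvNorm, ← tsum_expSM_coeff]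
  exact tsum_congr fun k => abs_of_nonneg (expSM_coeff_nonneg hf k)

def jump (a : ℤ) : ℝ[ℤ] := AddMonoidAlgebra.single a 1 - 1

theorem coeff_jump (a : ℤ) : ⇑(jump a).coeff = dirac a - dirac 0 := by
  rw [jump, AddMonoidAlgebra.coeff_sub, Finsupp.coe_sub, coeff_single_one_eq_dirac,
    coeff_one_eq_dirac]

theorem coeff_smul_jump (r : ℝ) (a : ℤ) : ⇑(r • jump a).coeff = r • (dirac a - dirac 0) := by
  rw [AddMonoidAlgebra.coeff_smul, Finsupp.coe_smul, coeff_jump]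

theorem mass_jump (a : ℤ) : mass (jump a) = 0 := by
  rw [jump, map_sub, mass_single, map_one, sub_self]

theorem coeff_smul_jump_add_smul_jump_nonneg {x y : ℝ} (hx : 0 ≤ x) (hy : 0 ≤ y) (a b : ℤ)
    {k : ℤ} (hk : k ≠ 0) : 0 ≤ (x • jump a + y • jump b).coeff k := by
  have hjump (c : ℤ) : (jump c).coeff k = dirac c k := by
    rw [congrFun (coeff_jump c) k]
    simp [dirac, hk]
  simp only [AddMonoidAlgebra.coeff_add, AddMonoidAlgebra.coeff_smul, Finsupp.add_apply,
    Finsupp.smul_apply, hjump, smul_eq_mul]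
  exact add_nonneg (mul_nonneg hx (dirac_nonneg a k)) (mul_nonneg hy (dirac_nonneg b k))

theorem skellam_pow_factorization :
    ∀ (a b : ℝ), 0 ≤ a → a ≤ 1 / 30 → 0 < b → b ≤ 1 / 30 →
      ∀ n : ℕ, 1 ≤ n →
      ∃ Θ : SM, tvNorm Θ ≤ 1 ∧
        convPow (skellam a b) n =
          conv (expSM ((0.5 * n * b) • (dirac 1 - dirac 0))) Θ := by
  intro a b ha0 ha hb0 hb n _
  set lam := b / (1 - 2 * a + 2 * b)
  set c : ℝ := 0.5 * n * b
  have hlam : b / 2 ≤ lam := div_le_div_of_nonneg_left hb0.le (by linarith) (by linarith)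
  have hx : 0 ≤ n * lam - c := by
    have := mul_le_mul_of_nonneg_left hlam (Nat.cast_nonneg (α := ℝ) n)
    norm_num [c] at this ⊢
    linarith
  have hy : 0 ≤ n * lam := mul_nonneg n.cast_nonneg (by linarith)
  have hD : skellam a b = expSM ⇑(lam • jump 1 + lam • jump (-1)).coeff := by
    simp [skellam, coeff_jump, lam]
  have hsplit : n • (lam • jump 1 + lam • jump (-1))
      = c • jump 1 + ((n * lam - c) • jump 1 + (n * lam) • jump (-1)) := by
    rw [← Nat.cast_smul_eq_nsmul ℝ]
    module
  refine ⟨expSM ⇑((n * lam - c) • jump 1 + (n * lam) • jump (-1)).coeff, ?_, ?_⟩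
  · rw [tvNorm_expSM_coeff fun k hk => coeff_smul_jump_add_smul_jump_nonneg hx hy 1 (-1) hk]
    simp [mass_jump]
  · rw [hD, convPow_expSM_coeff, hsplit, ← conv_expSM_coeff, coeff_smul_jump]
end
end

section
/- There exists an absolute constant C > 0 such that for all α, β with 0 ≤ α ≤ 1/30 and 0 < β ≤ 1/30, ‖D − I − (2β/(1−2α+2β))·U‖_TV ≤ C·β², where U = (I₋₁+I₁)/2 − I, λ = β/(1−2α+2β) and D = exp{λ(I₁−I) + λ(I₋₁−I)}. -/
open scoped BigOperators

noncomputable section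

open Pointwise

lemma tvNorm_nonneg (M : SM) : 0 ≤ tvNorm M := tsum_nonneg fun _ => abs_nonneg _

lemma conv_eq_sum {A B : SM} {t : Finset ℤ} (hB : ∀ k ∉ t, B k = 0) (m : ℤ) :
    conv A B m = ∑ k ∈ t, A (m - k) * B k :=
  tsum_eq_sum fun k hk => by rw [hB k hk, mul_zero]

lemma conv_supp {A B : SM} {s t : Finset ℤ} (hA : ∀ k ∉ s, A k = 0)
    (hB : ∀ k ∉ t, B k = 0) : ∀ m ∉ s + t, conv A B m = 0 := by
  intro m hm
  rw [conv_eq_sum hB]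
  refine Finset.sum_eq_zero fun k hk => ?_
  have hms : m - k ∉ s := fun h => hm (by simpa using Finset.add_mem_add h hk)
  rw [hA _ hms, zero_mul]

lemma sum_abs_le_of_supp {A : SM} {s : Finset ℤ} (hA : ∀ k ∉ s, A k = 0) (u : Finset ℤ) :
    ∑ j ∈ u, |A j| ≤ ∑ j ∈ s, |A j| := by
  have h1 : ∑ j ∈ u ∩ s, |A j| = ∑ j ∈ u, |A j| := by
    refine Finset.sum_subset Finset.inter_subset_left fun j hj hj' => ?_
    rw [hA j (fun hs => hj' (Finset.mem_inter.mpr ⟨hj, hs⟩)), abs_zero]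
  rw [← h1]
  exact Finset.sum_le_sum_of_subset_of_nonneg Finset.inter_subset_right
    fun j _ _ => abs_nonneg _

lemma tvNorm_eq_sum {A : SM} {s : Finset ℤ} (hA : ∀ k ∉ s, A k = 0) :
    tvNorm A = ∑ k ∈ s, |A k| :=
  tsum_eq_sum fun k hk => by rw [hA k hk, abs_zero]

lemma abs_le_tvNorm {A : SM} {s : Finset ℤ} (hA : ∀ k ∉ s, A k = 0) (k : ℤ) :
    |A k| ≤ tvNorm A := by
  by_cases hk : k ∈ s
  · rw [tvNorm_eq_sum hA]
    exact Finset.single_le_sum (f := fun k => |A k|) (fun i _ => abs_nonneg _) hk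
  · rw [hA k hk, abs_zero]; exact tvNorm_nonneg A

lemma tvNorm_conv_le {A B : SM} {s t : Finset ℤ} (hA : ∀ k ∉ s, A k = 0)
    (hB : ∀ k ∉ t, B k = 0) : tvNorm (conv A B) ≤ tvNorm A * tvNorm B := by
  have key : ∀ k : ℤ, ∑ m ∈ s + t, |A (m - k)| ≤ ∑ m ∈ s, |A m| := by
    intro k
    have him : ∑ j ∈ (s + t).image (fun m => m - k), |A j| = ∑ m ∈ s + t, |A (m - k)| :=
      Finset.sum_image (fun x _ y _ h => by omega)
    calc ∑ m ∈ s + t, |A (m - k)| = ∑ j ∈ (s + t).image (fun m => m - k), |A j| := him.symm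
      _ ≤ ∑ j ∈ s, |A j| := sum_abs_le_of_supp hA _
  rw [tvNorm_eq_sum (conv_supp hA hB), tvNorm_eq_sum hA, tvNorm_eq_sum hB]
  calc ∑ m ∈ s + t, |conv A B m| ≤ ∑ m ∈ s + t, ∑ k ∈ t, |A (m - k)| * |B k| := by
        refine Finset.sum_le_sum fun m _ => ?_
        rw [conv_eq_sum hB]
        exact (Finset.abs_sum_le_sum_abs _ _).trans (le_of_eq (by simp [abs_mul]))
    _ = ∑ k ∈ t, ∑ m ∈ s + t, |A (m - k)| * |B k| := Finset.sum_comm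
    _ ≤ ∑ k ∈ t, (∑ m ∈ s, |A m|) * |B k| := by
        refine Finset.sum_le_sum fun k _ => ?_
        rw [← Finset.sum_mul]
        exact mul_le_mul_of_nonneg_right (key k) (abs_nonneg _)
    _ = (∑ m ∈ s, |A m|) * ∑ k ∈ t, |B k| := by rw [← Finset.mul_sum]

lemma convPow_bound {N : SM} {s : Finset ℤ} (hN : ∀ k ∉ s, N k = 0) (j : ℕ) :
    ∃ u : Finset ℤ, (∀ k ∉ u, convPow N j k = 0) ∧ tvNorm (convPow N j) ≤ tvNorm N ^ j := by
  induction j with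
  | zero =>
    have hsupp : ∀ k ∉ ({0} : Finset ℤ), convPow N 0 k = 0 := by
      intro k hk
      simp only [convPow, dirac]
      rw [if_neg (by simpa using hk)]
    refine ⟨{0}, hsupp, ?_⟩
    rw [pow_zero, tvNorm_eq_sum hsupp]
    simp [convPow, dirac]
  | succ n ih =>
    obtain ⟨u, hu, hn⟩ := ih
    refine ⟨u + s, conv_supp hu hN, ?_⟩
    calc tvNorm (conv (convPow N n) N) ≤ tvNorm (convPow N n) * tvNorm N := tvNorm_conv_le hu hN
      _ ≤ tvNorm N ^ n * tvNorm N := mul_le_mul_of_nonneg_right hn (tvNorm_nonneg N)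
      _ = tvNorm N ^ (n + 1) := (pow_succ _ _).symm

lemma convPow_one (N : SM) : convPow N 1 = N := by
  funext m
  show conv (dirac 0) N m = N m
  unfold conv
  rw [tsum_eq_single m]
  · simp [dirac]
  · intro k hk
    have : m - k ≠ 0 := by omega
    simp [dirac, this]

lemma expSM_remainder_bound {N : SM} {s : Finset ℤ} (hN : ∀ k ∉ s, N k = 0)
    (ht1 : tvNorm N ≤ 1) :
    tvNorm (expSM N - dirac 0 - N) ≤ 2 * tvNorm N ^ 2 := by
  set t := tvNorm N with htdef
  have ht0 : 0 ≤ t := tvNorm_nonneg N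
  -- pointwise bound on convolution powers
  choose u hu hb using fun j : ℕ => convPow_bound hN j
  have hbound : ∀ (j : ℕ) (k : ℤ), |convPow N j k| ≤ t ^ j := fun j k =>
    (abs_le_tvNorm (hu j) k).trans (hb j)
  have hfact2 : ∀ j : ℕ, (2:ℝ) ^ j ≤ ((j + 2).factorial : ℝ) := by
    intro j
    have h1 : (2:ℕ) ^ j ≤ (j + 2).factorial := by
      have := Nat.factorial_mul_pow_le_factorial (m := 1) (n := j)
      simp only [Nat.factorial_one, one_mul] at this
      calc (2:ℕ) ^ j ≤ (1 + j).factorial := by simpa using this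
        _ ≤ (j + 2).factorial := Nat.factorial_le (by omega)
    exact_mod_cast h1
  -- summability of exp series at each point
  have hfj : ∀ k : ℤ, Summable (fun j : ℕ => convPow N j k / (j.factorial : ℝ)) := by
    intro k
    refine Summable.of_abs (Summable.of_nonneg_of_le (fun j => abs_nonneg _) (fun j => ?_)
      (Real.summable_pow_div_factorial t))
    rw [abs_div, Nat.abs_cast]
    gcongr <;> first
      | exact hbound j k
      | exact_mod_cast Nat.factorial_pos j
  -- pointwise identity for the remainder
  have hpt : ∀ k : ℤ, (expSM N - dirac 0 - N) k
      = ∑' j : ℕ, convPow N (j + 2) k / ((j + 2).factorial : ℝ) := by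
    intro k
    have h0 := hfj k
    have h1 : Summable (fun j : ℕ => convPow N (j + 1) k / ((j + 1).factorial : ℝ)) :=
      (summable_nat_add_iff 1).mpr h0
    have e1 : expSM N k = convPow N 0 k / ((Nat.factorial 0 : ℕ) : ℝ)
        + ∑' j : ℕ, convPow N (j + 1) k / ((j + 1).factorial : ℝ) := Summable.tsum_eq_zero_add h0
    have e2 : (∑' j : ℕ, convPow N (j + 1) k / ((j + 1).factorial : ℝ))
        = convPow N 1 k / ((Nat.factorial 1 : ℕ) : ℝ)
          + ∑' j : ℕ, convPow N (j + 2) k / ((j + 2).factorial : ℝ) := by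
      have := Summable.tsum_eq_zero_add h1
      simpa using this
    have : (expSM N - dirac 0 - N) k = expSM N k - dirac 0 k - N k := rfl
    rw [this, e1, e2, convPow_one]
    show dirac 0 k / ((Nat.factorial 0 : ℕ) : ℝ) + _ - dirac 0 k - N k = _
    simp only [Nat.factorial_zero, Nat.factorial_one, Nat.cast_one, div_one]
    ring
  -- double sum of absolute values
  set h : ℕ → ℤ → ℝ := fun j k => |convPow N (j + 2) k / ((j + 2).factorial : ℝ)| with hdef
  have hnn : ∀ j k, 0 ≤ h j k := fun j k => abs_nonneg _
  have habs : ∀ j k, h j k = |convPow N (j + 2) k| / ((j + 2).factorial : ℝ) := by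
    intro j k
    rw [hdef]
    simp only [abs_div, Nat.abs_cast]
  have hsumk : ∀ j : ℕ, Summable (fun k : ℤ => h j k) := by
    intro j
    refine summable_of_ne_finset_zero (s := u (j + 2)) fun k hk => ?_
    rw [habs, hu (j + 2) k hk, abs_zero, zero_div]
  have htsumk : ∀ j : ℕ, ∑' k : ℤ, h j k
      = tvNorm (convPow N (j + 2)) / ((j + 2).factorial : ℝ) := by
    intro j
    simp only [habs]
    rw [tsum_div_const]
    rfl
  have hS_le : ∀ j : ℕ, ∑' k : ℤ, h j k ≤ t ^ 2 * (1 / 2) ^ j := by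
    intro j
    rw [htsumk j]
    have hfp : (0:ℝ) < ((j + 2).factorial : ℝ) := by exact_mod_cast Nat.factorial_pos _
    calc tvNorm (convPow N (j + 2)) / ((j + 2).factorial : ℝ)
        ≤ t ^ (j + 2) / ((j + 2).factorial : ℝ) := by gcongr; exact hb (j + 2)
      _ ≤ t ^ (j + 2) / (2 : ℝ) ^ j := by
          gcongr <;> first
            | exact hfact2 j
            | positivity
      _ = t ^ 2 * t ^ j / 2 ^ j := by ring
      _ ≤ t ^ 2 * 1 / 2 ^ j := by
          gcongr <;> first
            | exact pow_le_one₀ ht0 ht1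
            | positivity
      _ = t ^ 2 * (1 / 2) ^ j := by rw [div_pow, one_pow]; ring
  have hgeom : Summable (fun j : ℕ => t ^ 2 * (1 / 2 : ℝ) ^ j) :=
    (summable_geometric_of_lt_one (by norm_num) (by norm_num)).mul_left _
  have hSummS : Summable (fun j : ℕ => ∑' k : ℤ, h j k) :=
    Summable.of_nonneg_of_le (fun j => tsum_nonneg (hnn j)) hS_le hgeom
  have H : Summable (fun p : ℕ × ℤ => h p.1 p.2) :=
    (summable_prod_of_nonneg (fun p => hnn p.1 p.2)).mpr ⟨hsumk, hSummS⟩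
  have Hswap : Summable (fun p : ℤ × ℕ => h p.2 p.1) := H.prod_symm
  have hSummS' : Summable (fun k : ℤ => ∑' j : ℕ, h j k) :=
    ((summable_prod_of_nonneg (fun p => hnn p.2 p.1)).mp Hswap).2
  have hRabs : ∀ k : ℤ, |(expSM N - dirac 0 - N) k| ≤ ∑' j : ℕ, h j k := by
    intro k
    rw [hpt k]
    have hsabs : Summable fun j : ℕ => ‖convPow N (j + 2) k / ((j + 2).factorial : ℝ)‖ := by
      simpa [Real.norm_eq_abs, abs_div, Nat.abs_cast] using (summable_nat_add_iff 2).mpr (hfj k).abs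
    calc |∑' j : ℕ, convPow N (j + 2) k / ((j + 2).factorial : ℝ)|
        = ‖∑' j : ℕ, convPow N (j + 2) k / ((j + 2).factorial : ℝ)‖ := (Real.norm_eq_abs _).symm
      _ ≤ ∑' j : ℕ, ‖convPow N (j + 2) k / ((j + 2).factorial : ℝ)‖ := norm_tsum_le_tsum_norm hsabs
      _ = ∑' j : ℕ, h j k := by simp only [hdef, Real.norm_eq_abs, abs_div, Nat.abs_cast]
  have hRsumm : Summable (fun k : ℤ => |(expSM N - dirac 0 - N) k|) :=
    Summable.of_nonneg_of_le (fun k => abs_nonneg _) hRabs hSummS'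
  calc tvNorm (expSM N - dirac 0 - N)
      ≤ ∑' k : ℤ, ∑' j : ℕ, h j k := Summable.tsum_le_tsum hRabs hRsumm hSummS'
    _ = ∑' j : ℕ, ∑' k : ℤ, h j k := Summable.tsum_comm H
    _ ≤ ∑' j : ℕ, t ^ 2 * (1 / 2 : ℝ) ^ j := Summable.tsum_le_tsum hS_le hSummS hgeom
    _ = t ^ 2 * ∑' j : ℕ, (1 / 2 : ℝ) ^ j := tsum_mul_left
    _ = t ^ 2 * 2 := by rw [tsum_geometric_of_lt_one (by norm_num) (by norm_num)]; norm_num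
    _ = 2 * t ^ 2 := by ring

theorem skellam_first_order :
    ∃ C : ℝ, 0 < C ∧ ∀ (a b : ℝ), 0 ≤ a → a ≤ 1 / 30 → 0 < b → b ≤ 1 / 30 →
      tvNorm (skellam a b - dirac 0 - (2 * b / (1 - 2 * a + 2 * b)) • Um) ≤
        C * b ^ 2 := by
  refine ⟨40, by norm_num, fun a b ha ha' hb hb' => ?_⟩
  set d : ℝ := 1 - 2 * a + 2 * b with hd
  clear_value d
  have hd0 : (0:ℝ) < d := by rw [hd]; linarith
  have hdge : (14:ℝ)/15 ≤ d := by rw [hd]; linarith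
  have hc0 : (0:ℝ) ≤ 2 * b / d := by positivity
  have harg : (b / d) • (dirac 1 - dirac 0) + (b / d) • (dirac (-1) - dirac 0)
      = (2 * b / d) • Um := by
    funext k
    simp only [Um, Lm, dirac, Pi.add_apply, Pi.sub_apply, Pi.smul_apply, smul_eq_mul]
    split_ifs <;> first | ring | (exfalso; omega)
  set N : SM := (2 * b / d) • Um with hNdef
  clear_value N
  have hsk : skellam a b = expSM N := by
    unfold skellam
    rw [← hd, harg]
  have hNs : ∀ k ∉ ({-1, 0, 1} : Finset ℤ), N k = 0 := by
    intro k hk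
    simp only [Finset.mem_insert, Finset.mem_singleton, not_or] at hk
    obtain ⟨h1, h2, h3⟩ := hk
    simp [hNdef, Um, Lm, dirac, h1, h2, h3]
  have v1 : N (-1) = 2 * b / d * 2⁻¹ := by
    norm_num [hNdef, Um, Lm, dirac]
  have v2 : N 0 = -(2 * b / d) := by
    norm_num [hNdef, Um, Lm, dirac]
  have v3 : N 1 = 2 * b / d * 2⁻¹ := by
    norm_num [hNdef, Um, Lm, dirac]
  have htv : tvNorm N = 4 * b / d := by
    rw [tvNorm_eq_sum hNs]
    rw [show ({-1, 0, 1} : Finset ℤ) = insert (-1) (insert 0 {1}) from rfl,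
      Finset.sum_insert (by decide), Finset.sum_insert (by decide), Finset.sum_singleton]
    rw [v1, v2, v3, abs_of_nonneg (show (0:ℝ) ≤ 2 * b / d * 2⁻¹ by positivity), abs_neg,
      abs_of_nonneg hc0]
    ring
  have ht1 : tvNorm N ≤ 1 := by
    rw [htv, div_le_one hd0]; linarith
  have hmain := expSM_remainder_bound hNs ht1
  rw [hsk]
  refine hmain.trans ?_
  rw [htv]
  have he : 2 * (4 * b / d) ^ 2 = 32 * b ^ 2 / d ^ 2 := by ring
  rw [he, div_le_iff₀ (by positivity)]
  have hd2 : ((14:ℝ)/15) ^ 2 ≤ d ^ 2 := by nlinarith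
  nlinarith [mul_nonneg (sq_nonneg b) (sub_nonneg.mpr hd2), sq_nonneg b]
end
end

section
/- Let 0 ≤ α ≤ 1/30. Then there exists a finite signed measure Θ on ℤ with ‖Θ‖_TV ≤ 0.154 such that H − I = (1−2α)·U*(I + Θ), where U = (I₋₁+I₁)/2 − I; equivalently, ‖H − I − (1−2α)·U‖_TV ≤ 0.154·(1−2α)·‖U*Θ'‖_TV for a suitable Θ' with ‖Θ'‖_TV ≤ 1, i.e. the remainder H − I − (1−2α)U equals 0.154·(1−2α)·U*Θ' with ‖Θ'‖_TV ≤ 1. -/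
open scoped BigOperators

noncomputable section

/-! With `c = 2α` and `R = ∑ⱼ cʲ L^{*j} = (I - cL)⁻¹`, one has `H = (1 - c) L * R` and
`R = I + c L * R`, so `H - I = L * R - R = U * R` and
`H - I - (1 - c) U = U * (R - (1 - c) I)`. Since `R ≥ 0` has mass `(1 - c)⁻¹` and `R{0} ≥ 1`,
`‖R - (1 - c) I‖_TV = (1 - c)⁻¹ - (1 - c)`, which is at most `0.154 (1 - c)`
when `c ≤ 1/15`. -/

def IsProbDist (P : SM) : Prop := (∀ k, 0 ≤ P k) ∧ HasSum P 1

lemma conv_comm (M V : SM) : conv M V = conv V M := by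
  funext m
  rw [conv, conv, ← (Equiv.subLeft m).tsum_eq]
  simp [mul_comm]

lemma conv_apply_eq_sum (V M : SM) (s : Finset ℤ) (hM : ∀ k ∉ s, M k = 0) (m : ℤ) :
    conv V M m = ∑ k ∈ s, V (m - k) * M k :=
  tsum_eq_sum fun k hk => by simp [hM k hk]

lemma conv_dirac_zero (M : SM) : conv M (dirac 0) = M := by
  funext m
  simp [conv, dirac]

lemma conv_smul_right (M V : SM) (r : ℝ) : conv M (r • V) = r • conv M V := by
  funext m
  simp only [conv, Pi.smul_apply, smul_eq_mul, ← tsum_mul_left]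
  exact tsum_congr fun k => by ring

lemma tvNorm_smul (r : ℝ) (M : SM) : tvNorm (r • M) = |r| * tvNorm M := by
  simp only [tvNorm, Pi.smul_apply, smul_eq_mul, abs_mul, tsum_mul_left]

lemma tvNorm_eq_of_nonneg {M : SM} {s : ℝ} (hM : ∀ k, 0 ≤ M k) (hs : HasSum M s) :
    tvNorm M = s := by
  simp only [tvNorm, abs_of_nonneg (hM _), hs.tsum_eq]

lemma conv_Lm_apply (V : SM) (k : ℤ) : conv V Lm k = (V (k - 1) + V (k + 1)) / 2 := by
  rw [conv_apply_eq_sum V Lm {-1, 1} (fun j hj => by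
    simp only [Finset.mem_insert, Finset.mem_singleton, not_or] at hj
    simp [Lm, dirac, hj.1, hj.2])]
  simp only [Int.reduceNeg, Lm, Pi.smul_apply, Pi.add_apply, dirac, smul_eq_mul,
    Finset.mem_singleton, reduceCtorEq, not_false_eq_true, Finset.sum_insert, sub_neg_eq_add,
    ↓reduceIte, add_zero, mul_one, Finset.sum_singleton, zero_add]
  ring

lemma conv_Um_apply (V : SM) (k : ℤ) : conv Um V k = (V (k - 1) + V (k + 1)) / 2 - V k := by
  rw [conv_comm, conv_apply_eq_sum V Um {-1, 0, 1} (fun j hj => by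
    simp only [Finset.mem_insert, Finset.mem_singleton, not_or] at hj
    simp [Um, Lm, dirac, hj.1, hj.2.1, hj.2.2])]
  simp only [Int.reduceNeg, Um, Lm, smul_add, Pi.sub_apply, Pi.add_apply, Pi.smul_apply, dirac,
    smul_eq_mul, mul_ite, mul_one, mul_zero, Finset.mem_insert, neg_eq_zero, one_ne_zero,
    Finset.mem_singleton, reduceCtorEq, or_self, not_false_eq_true, Finset.sum_insert,
    sub_neg_eq_add, ↓reduceIte, add_zero, sub_zero, zero_ne_one, zero_eq_neg, zero_sub, mul_neg,
    Finset.sum_singleton, zero_add]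
  ring

lemma conv_Um_sub (V W : SM) : conv Um (V - W) = conv Um V - conv Um W := by
  funext k
  simp only [conv_Um_apply, Pi.sub_apply]
  ring

lemma isProbDist_dirac (a : ℤ) : IsProbDist (dirac a) :=
  ⟨fun k => by unfold dirac; split_ifs <;> norm_num, hasSum_ite_eq a 1⟩

lemma IsProbDist.le_one {P : SM} (hP : IsProbDist P) (k : ℤ) : P k ≤ 1 :=
  le_hasSum hP.2 k fun j _ => hP.1 j

lemma IsProbDist.conv_Lm {P : SM} (hP : IsProbDist P) : IsProbDist (conv P Lm) := by
  refine ⟨fun k => ?_, ?_⟩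
  · rw [conv_Lm_apply]; linarith [hP.1 (k - 1), hP.1 (k + 1)]
  · have h₁ : HasSum (fun k => P (k - 1)) 1 := (Equiv.subRight 1).hasSum_iff.2 hP.2
    have h₂ : HasSum (fun k => P (k + 1)) 1 := (Equiv.addRight 1).hasSum_iff.2 hP.2
    simpa only [funext (conv_Lm_apply P), add_self_div_two] using (h₁.add h₂).div_const 2

lemma isProbDist_convPow_Lm (n : ℕ) : IsProbDist (convPow Lm n) := by
  induction n with
  | zero => exact isProbDist_dirac 0
  | succ n ih => exact ih.conv_Lm

/-- The Neumann series `∑ⱼ cʲ L^{*j}` of `(I - c L)⁻¹`. -/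
def resolventLm (c : ℝ) : SM := fun k => ∑' j : ℕ, c ^ j * convPow Lm j k

section Resolvent

variable {c : ℝ}

lemma summable_pow_mul_convPow_Lm (hc0 : 0 ≤ c) (hc1 : c < 1) (k : ℤ) :
    Summable fun j : ℕ => c ^ j * convPow Lm j k := by
  refine (summable_geometric_of_lt_one hc0 hc1).of_nonneg_of_le
    (fun j => mul_nonneg (pow_nonneg hc0 j) ((isProbDist_convPow_Lm j).1 k)) fun j => ?_
  exact mul_le_of_le_one_right (pow_nonneg hc0 j) ((isProbDist_convPow_Lm j).le_one k)

lemma resolventLm_apply_eq (hc0 : 0 ≤ c) (hc1 : c < 1) (k : ℤ) :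
    resolventLm c k =
      dirac 0 k + c * ((resolventLm c (k - 1) + resolventLm c (k + 1)) / 2) := by
  have hsum := summable_pow_mul_convPow_Lm hc0 hc1
  rw [resolventLm, (hsum k).tsum_eq_zero_add, resolventLm, resolventLm,
    ← (hsum _).tsum_add (hsum _), ← tsum_div_const, ← tsum_mul_left]
  congr 1
  · simp [convPow]
  · refine tsum_congr fun j => ?_
    rw [convPow, conv_Lm_apply]
    ring

lemma hasSum_resolventLm (hc0 : 0 ≤ c) (hc1 : c < 1) : HasSum (resolventLm c) (1 - c)⁻¹ := by
  set f : ℕ × ℤ → ℝ := fun p => c ^ p.1 * convPow Lm p.1 p.2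
  have hrow (j : ℕ) : HasSum (fun k => f (j, k)) (c ^ j) := by
    simpa using (isProbDist_convPow_Lm j).2.mul_left (c ^ j)
  have hf : Summable f := by
    refine (summable_prod_of_nonneg fun p => ?_).2 ⟨fun j => (hrow j).summable, ?_⟩
    · exact mul_nonneg (pow_nonneg hc0 _) ((isProbDist_convPow_Lm _).1 _)
    · simpa only [(hrow _).tsum_eq] using summable_geometric_of_lt_one hc0 hc1
  have htot : ∑' p, f p = (1 - c)⁻¹ :=
    (hf.hasSum.prod_fiberwise hrow).unique (hasSum_geometric_of_lt_one hc0 hc1)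
  rw [← htot, ← (Equiv.prodComm ℤ ℕ).tsum_eq]
  exact hf.prod_symm.hasSum.prod_fiberwise fun k =>
    (summable_pow_mul_convPow_Lm hc0 hc1 k).hasSum

lemma dirac_le_resolventLm (hc0 : 0 ≤ c) (hc1 : c < 1) (k : ℤ) :
    dirac 0 k ≤ resolventLm c k := by
  have := (summable_pow_mul_convPow_Lm hc0 hc1 k).le_tsum 0 fun j _ =>
    mul_nonneg (pow_nonneg hc0 j) ((isProbDist_convPow_Lm j).1 k)
  simpa [convPow, resolventLm] using this

end Resolvent

lemma Hm_sub_dirac_eq {a : ℝ} (ha0 : 0 ≤ a) (ha1 : a < 1 / 2) :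
    Hm a - dirac 0 = conv Um (resolventLm (2 * a)) := by
  have hc0 : 0 ≤ 2 * a := by linarith
  have hc1 : 2 * a < 1 := by linarith
  have hsum := summable_pow_mul_convPow_Lm hc0 hc1
  have hH (k : ℤ) : Hm a k = (1 - 2 * a) *
      ((resolventLm (2 * a) (k - 1) + resolventLm (2 * a) (k + 1)) / 2) := by
    rw [Hm, resolventLm, resolventLm, ← (hsum _).tsum_add (hsum _), ← tsum_div_const,
      ← tsum_mul_left]
    refine tsum_congr fun j => ?_
    rw [convPow, conv_Lm_apply]
    ring
  funext k
  rw [Pi.sub_apply, conv_Um_apply, hH, resolventLm_apply_eq hc0 hc1 k]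
  ring

lemma resolventLm_sub_smul_dirac_nonneg {c : ℝ} (hc0 : 0 ≤ c) (hc1 : c < 1) (k : ℤ) :
    0 ≤ (resolventLm c - (1 - c) • dirac 0) k := by
  have hR := dirac_le_resolventLm hc0 hc1 k
  have hδ := (isProbDist_dirac 0).1 k
  simp only [Pi.sub_apply, Pi.smul_apply, smul_eq_mul]
  nlinarith

lemma tvNorm_resolventLm_sub_smul_dirac {c : ℝ} (hc0 : 0 ≤ c) (hc1 : c < 1) :
    tvNorm (resolventLm c - (1 - c) • dirac 0) = (1 - c)⁻¹ - (1 - c) := by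
  have hδ : HasSum ((1 - c) • dirac 0) (1 - c) := by
    simpa [Pi.smul_def] using (isProbDist_dirac 0).2.const_smul (1 - c)
  exact tvNorm_eq_of_nonneg (resolventLm_sub_smul_dirac_nonneg hc0 hc1)
    ((hasSum_resolventLm hc0 hc1).sub hδ)

theorem H_sub_I_first_order :
    ∀ a : ℝ, 0 ≤ a → a ≤ 1 / 30 →
      ∃ Θ : SM, tvNorm Θ ≤ 1 ∧
        Hm a - dirac 0 - (1 - 2 * a) • Um = (0.154 * (1 - 2 * a)) • conv Um Θ := by
  intro a ha0 ha1
  set c := 2 * a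
  have hc0 : 0 ≤ c := by linarith
  have hc1 : c < 1 := by linarith
  have hd : 0 < 0.154 * (1 - c) := by linarith
  refine ⟨(0.154 * (1 - c))⁻¹ • (resolventLm c - (1 - c) • dirac 0), ?_, ?_⟩
  · rw [tvNorm_smul, tvNorm_resolventLm_sub_smul_dirac hc0 hc1, abs_of_pos (inv_pos.2 hd),
      inv_mul_le_iff₀ hd, sub_le_iff_le_add, inv_le_iff_one_le_mul₀ (by linarith)]
    nlinarith
  · rw [conv_smul_right, smul_smul, mul_inv_cancel₀ hd.ne', one_smul, conv_Um_sub,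
      conv_smul_right, conv_dirac_zero, Hm_sub_dirac_eq ha0 (by linarith)]
end
end
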